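/- Suppose next-token consistency holds at every time t with 1 ≤ t ≤ T−1 and transition consistency holds at every time t with 1 ≤ t ≤ T−2. Then for every t with 1 ≤ t ≤ T−1, the σ-algebras σ(X_{t+1:T}) and σ(X_{1:t}) are conditionally independent given σ(h_t). -/

import Mathlib

/-!
Write `𝓟 t = σ(X_{1:t})` and `𝓗 t = σ(h_t) ≤ 𝓟 t`. It suffices to show that every future event
`A` satisfies `E[1_A | 𝓟 t] = E[1_A | 𝓗 t]`: then for a past event `B`, pulling `1_B` out of
`E[· | 𝓟 t]` and projecting onto `𝓗 t` gives the product formula. As the vocabulary is finite, `A`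
may be taken to be an atom `{X_{t+1:T} = v} = {X_{t+1} = a} ∩ A'`, and the claim is proved by
backward induction on `t`. The induction hypothesis turns `E[1_{A'} | 𝓟 (t+1)]` into a function
`Z` of `h_{t+1}`; transition consistency, lifted from events to functions of `h_{t+1}` through the
conditional distribution of `h_{t+1}`, turns `E[Z | 𝓟 (t+1)]` into a function of
`(h_t, X_{t+1})`, which on `{X_{t+1} = a}` depends on `h_t` only; and next-token consistency
replaces `E[1_{X_{t+1} = a} | 𝓟 t]` by its `𝓗 t`-version. Hence `E[1_A | 𝓟 t]` is
`𝓗 t`-measurable.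
-/

open MeasureTheory ProbabilityTheory

noncomputable section

/-- The tuple of tokens `(X_{s+1}, …, X_{s+n})`. -/
def tup {Ω 𝒳 : Type*} (X : ℕ → Ω → 𝒳) (s n : ℕ) (ω : Ω) : Fin n → 𝒳 :=
  fun i => X (s + 1 + (i : ℕ)) ω

/-- Real-valued indicator of a set. -/
def ind {Ω : Type*} (A : Set Ω) : Ω → ℝ := A.indicator 1

section Indicator

variable {Ω : Type*}

lemma ind_inter (A B : Set Ω) : ind (A ∩ B) = ind A * ind B :=
  Set.inter_indicator_one

lemma ind_mul (A : Set Ω) (f : Ω → ℝ) : ind A * f = A.indicator f := by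
  funext ω
  by_cases hω : ω ∈ A <;> simp [ind, hω]

lemma stronglyMeasurable_ind {m : MeasurableSpace Ω} {A : Set Ω} (hA : MeasurableSet[m] A) :
    StronglyMeasurable[m] (ind A) :=
  stronglyMeasurable_const.indicator hA

lemma integrable_ind [MeasurableSpace Ω] {μ : Measure Ω} [IsFiniteMeasure μ] {A : Set Ω}
    (hA : MeasurableSet A) : Integrable (ind A) μ :=
  (integrable_const 1).indicator hA

end Indicator

section CondExp

variable {Ω : Type*} {m m' : MeasurableSpace Ω} [mΩ : MeasurableSpace Ω] {μ : Measure Ω}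
  [IsFiniteMeasure μ]

lemma condExp_ae_eq_of_condExp_ae_eq_of_le (hmm' : m ≤ m') (hm' : m' ≤ mΩ) {f g : Ω → ℝ}
    (hg : StronglyMeasurable[m] g) (hfg : μ[f|m'] =ᵐ[μ] g) : μ[f|m] =ᵐ[μ] g :=
  calc μ[f|m] =ᵐ[μ] μ[μ[f|m']|m] := (condExp_condExp_of_le hmm' hm').symm
    _ =ᵐ[μ] μ[g|m] := condExp_congr_ae hfg
    _ = g := condExp_of_stronglyMeasurable (hmm'.trans hm') hg (integrable_condExp.congr hfg)

lemma condExp_ind_mul_ae_eq_condExp_ind_mul_condExp (hmm' : m ≤ m') (hm' : m' ≤ mΩ)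
    {E : Set Ω} (hE : MeasurableSet[m'] E) {f : Ω → ℝ} (hf : Integrable f μ) :
    μ[ind E * f|m] =ᵐ[μ] μ[ind E * μ[f|m']|m] :=
  calc μ[ind E * f|m] =ᵐ[μ] μ[μ[ind E * f|m']|m] := (condExp_condExp_of_le hmm' hm').symm
    _ =ᵐ[μ] μ[ind E * μ[f|m']|m] := condExp_congr_ae <|
      condExp_mul_of_stronglyMeasurable_left (stronglyMeasurable_ind hE)
        (by rw [ind_mul]; exact hf.indicator (hm' _ hE)) hf

lemma condExp_ind_inter_ae_eq_mul (hmm' : m ≤ m') (hm' : m' ≤ mΩ) {A B : Set Ω}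
    (hA : MeasurableSet A) (hB : MeasurableSet[m'] B) (hAm : μ[ind A|m'] =ᵐ[μ] μ[ind A|m]) :
    μ[ind (A ∩ B)|m] =ᵐ[μ] μ[ind A|m] * μ[ind B|m] :=
  calc μ[ind (A ∩ B)|m] = μ[ind B * ind A|m] := by rw [ind_inter, mul_comm]
    _ =ᵐ[μ] μ[ind B * μ[ind A|m']|m] :=
        condExp_ind_mul_ae_eq_condExp_ind_mul_condExp hmm' hm' hB (integrable_ind hA)
    _ =ᵐ[μ] μ[μ[ind A|m] * ind B|m] := condExp_congr_ae <| by
        rw [mul_comm]; exact hAm.mul Filter.EventuallyEq.rfl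
    _ =ᵐ[μ] μ[ind A|m] * μ[ind B|m] :=
        condExp_mul_of_stronglyMeasurable_left stronglyMeasurable_condExp
          (by rw [mul_comm, ind_mul]; exact integrable_condExp.indicator (hm' _ hB))
          (integrable_ind (hm' _ hB))

lemma condExp_ind_ae_eq_of_forall_preimage_singleton {β : Type*} [Fintype β]
    [MeasurableSpace β] [MeasurableSingletonClass β] {W : Ω → β} (hW : Measurable W)
    (hWm : ∀ v, μ[ind (W ⁻¹' {v})|m] =ᵐ[μ] μ[ind (W ⁻¹' {v})|m'])
    {A : Set Ω} (hA : MeasurableSet[MeasurableSpace.comap W inferInstance] A) :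
    μ[ind A|m] =ᵐ[μ] μ[ind A|m'] := by
  classical
  obtain ⟨S, -, rfl⟩ := hA
  have hsum : ind (W ⁻¹' S) = ∑ v ∈ S.toFinset, ind (W ⁻¹' {v}) := by
    funext ω
    by_cases hω : W ω ∈ S <;> simp [ind, Set.indicator_apply, hω]
  have hint : ∀ v ∈ S.toFinset, Integrable (ind (W ⁻¹' {v})) μ :=
    fun v _ => integrable_ind (hW (measurableSet_singleton v))
  rw [hsum]
  calc μ[∑ v ∈ S.toFinset, ind (W ⁻¹' {v})|m]
      =ᵐ[μ] ∑ v ∈ S.toFinset, μ[ind (W ⁻¹' {v})|m] := condExp_finsetSum hint m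
    _ =ᵐ[μ] ∑ v ∈ S.toFinset, μ[ind (W ⁻¹' {v})|m'] := by
      filter_upwards [(Filter.eventually_all_finset S.toFinset).2 fun v _ => hWm v] with ω hω
      simp only [Finset.sum_apply]
      exact Finset.sum_congr rfl hω
    _ =ᵐ[μ] μ[∑ v ∈ S.toFinset, ind (W ⁻¹' {v})|m'] := (condExp_finsetSum hint m').symm

end CondExp

lemma exists_countable_isPiSystem_generateFrom_eq (H : Type*) [m : MeasurableSpace H]
    [MeasurableSpace.CountablyGenerated H] :
    ∃ C : Set (Set H), C.Countable ∧ IsPiSystem C ∧ MeasurableSpace.generateFrom C = m := by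
  obtain ⟨f, hf⟩ := (MeasurableSpace.countable_countableGeneratingSet (α := H)).exists_eq_range
    MeasurableSpace.nonempty_countableGeneratingSet
  have hmeas (i : ℕ) : MeasurableSet (f i) :=
    MeasurableSpace.measurableSet_countableGeneratingSet (hf ▸ Set.mem_range_self i)
  refine ⟨Set.range fun F : Finset ℕ => ⋂ i ∈ F, f i, Set.countable_range _, ?_, ?_⟩
  · rintro - ⟨F, rfl⟩ - ⟨G, rfl⟩ -
    exact ⟨F ∪ G, by ext; simp [or_imp, forall_and]⟩
  · refine le_antisymm (MeasurableSpace.generateFrom_le ?_) ?_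
    · rintro - ⟨F, rfl⟩
      exact .biInter F.countable_toSet fun i _ => hmeas i
    · rw [← MeasurableSpace.generateFrom_countableGeneratingSet (α := H), hf]
      refine MeasurableSpace.generateFrom_mono ?_
      rintro - ⟨i, rfl⟩
      exact ⟨{i}, by simp⟩

lemma ae_eq_of_forall_measurableSet_ae_eq {α β : Type*} [MeasurableSpace α] [MeasurableSpace β]
    [MeasurableSpace.CountablyGenerated β] {ν : Measure α} {κ η : α → Measure β}
    [∀ a, IsProbabilityMeasure (κ a)] [∀ a, IsProbabilityMeasure (η a)]
    (h : ∀ s, MeasurableSet s → ∀ᵐ a ∂ν, κ a s = η a s) : ∀ᵐ a ∂ν, κ a = η a := by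
  obtain ⟨C, hCc, hCpi, hCgen⟩ := exists_countable_isPiSystem_generateFrom_eq β
  have hCmeas : ∀ s ∈ C, MeasurableSet s := fun s hs => hCgen ▸ .basic s hs
  filter_upwards [(ae_ball_iff hCc).2 fun s hs => h s (hCmeas s hs)] with a ha
  exact ext_of_generate_finite C hCgen.symm hCpi ha (by simp)

section CondDistrib

variable {Ω α β H : Type*} [MeasurableSpace Ω] [MeasurableSpace α] [MeasurableSpace β]
  [MeasurableSpace H] [StandardBorelSpace H] [Nonempty H] {μ : Measure Ω} [IsFiniteMeasure μ]
  {Y : Ω → H} {W : Ω → α} {P : Ω → β}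

lemma condDistrib_comp_ae_eq_of_forall_condExp_ind_preimage_ae_eq (hY : Measurable Y)
    (hW : Measurable W) (hP : Measurable P)
    (hWP : ∀ B, MeasurableSet B → μ[ind {ω | Y ω ∈ B}|MeasurableSpace.comap P inferInstance]
      =ᵐ[μ] μ[ind {ω | Y ω ∈ B}|MeasurableSpace.comap W inferInstance]) :
    ∀ᵐ ω ∂μ, condDistrib Y W μ (W ω) = condDistrib Y P μ (P ω) := by
  refine ae_eq_of_forall_measurableSet_ae_eq fun B hB => ?_
  filter_upwards [condDistrib_ae_eq_condExp hW hY hB, condDistrib_ae_eq_condExp hP hY hB,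
    hWP B hB] with ω hWω hPω hω
  rw [← ENNReal.toReal_eq_toReal_iff' (measure_ne_top _ _) (measure_ne_top _ _),
    ← measureReal_def, ← measureReal_def, hWω, hPω]
  exact hω.symm

lemma condExp_ae_eq_of_forall_condExp_ind_preimage_ae_eq (hY : Measurable Y)
    (hW : Measurable W) (hP : Measurable P)
    (hWP : ∀ B, MeasurableSet B → μ[ind {ω | Y ω ∈ B}|MeasurableSpace.comap P inferInstance]
      =ᵐ[μ] μ[ind {ω | Y ω ∈ B}|MeasurableSpace.comap W inferInstance])
    {f : Ω → ℝ} (hf : StronglyMeasurable[MeasurableSpace.comap Y inferInstance] f)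
    (hfi : Integrable f μ) :
    μ[f|MeasurableSpace.comap W inferInstance]
      =ᵐ[μ] μ[f|MeasurableSpace.comap P inferInstance] := by
  obtain ⟨φ, hφ, rfl⟩ := hf.exists_eq_measurable_comp
  filter_upwards [condExp_ae_eq_integral_condDistrib hW hY.aemeasurable hφ hfi,
    condExp_ae_eq_integral_condDistrib hP hY.aemeasurable hφ hfi,
    condDistrib_comp_ae_eq_of_forall_condExp_ind_preimage_ae_eq hY hW hP hWP] with ω hWω hPω hω
  rw [Function.comp_def, hWω, hPω, hω]

end CondDistrib

lemma exists_ind_mul_eq_ind_mul_comp {Ω 𝒳 H : Type*} [MeasurableSpace 𝒳] [MeasurableSpace H]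
    {Y : Ω → H} {X : Ω → 𝒳} {f : Ω → ℝ}
    (hf : StronglyMeasurable[MeasurableSpace.comap (fun ω => (Y ω, X ω)) inferInstance] f)
    (a : 𝒳) : ∃ φ : H → ℝ, StronglyMeasurable φ ∧
      ind {ω | X ω = a} * f = ind {ω | X ω = a} * (φ ∘ Y) := by
  obtain ⟨ψ, hψ, rfl⟩ := hf.exists_eq_measurable_comp
  refine ⟨fun y => ψ (y, a), hψ.comp_measurable measurable_prodMk_right, ?_⟩
  funext ω
  by_cases hω : X ω = a <;> simp [ind, hω]

section Tuple

variable {Ω 𝒳 : Type*} {X : ℕ → Ω → 𝒳}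

lemma tup_succ (s n : ℕ) (ω : Ω) :
    tup X s (n + 1) ω = Fin.cons (X (s + 1) ω) (tup X (s + 1) n ω) := by
  ext i
  cases i using Fin.cases with
  | zero => rfl
  | succ i =>
    simp only [tup, Fin.cons_succ, Fin.val_succ]
    congr 1
    omega

lemma preimage_tup_succ_singleton (s n : ℕ) (v : Fin (n + 1) → 𝒳) :
    tup X s (n + 1) ⁻¹' {v} = {ω | X (s + 1) ω = v 0} ∩ tup X (s + 1) n ⁻¹' {Fin.tail v} := by
  ext ω
  rw [Set.mem_preimage, tup_succ, Set.mem_singleton_iff]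
  nth_rewrite 1 [← Fin.cons_self_tail v]
  exact Fin.cons_injective2.eq_iff

variable [MeasurableSpace 𝒳]

lemma comap_tup_le_comap_tup_succ (t : ℕ) :
    MeasurableSpace.comap (tup X 0 t) inferInstance
      ≤ MeasurableSpace.comap (tup X 0 (t + 1)) inferInstance := by
  have : tup X 0 t = (fun w i => w (Fin.castSucc i)) ∘ tup X 0 (t + 1) := rfl
  rw [this, ← MeasurableSpace.comap_comp]
  exact MeasurableSpace.comap_mono (measurable_pi_lambda _ fun i => measurable_pi_apply _).comap_le

lemma measurable_comap_tup_succ (t : ℕ) :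
    Measurable[MeasurableSpace.comap (tup X 0 (t + 1)) inferInstance] (X (t + 1)) := by
  have : X (t + 1) = (fun w => w (Fin.last t)) ∘ tup X 0 (t + 1) := by
    funext ω; simp [tup, add_comm]
  rw [this]
  exact (measurable_pi_apply _).comp (comap_measurable _)

lemma measurable_tup [MeasurableSpace Ω] (hX : ∀ t, Measurable (X t)) (s n : ℕ) :
    Measurable (tup X s n) :=
  measurable_pi_lambda _ fun _ => hX _

end Tuple

section Consistency

variable {Ω 𝒳 H : Type*} [MeasurableSpace Ω] [MeasurableSpace 𝒳] [MeasurableSpace H]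

def NextTokenConsistent (μ : Measure Ω) (X : ℕ → Ω → 𝒳) (h : ℕ → Ω → H) (t : ℕ) : Prop :=
  ∀ a : 𝒳, μ[ind {ω | X (t + 1) ω = a}|MeasurableSpace.comap (h t) inferInstance]
    =ᵐ[μ] μ[ind {ω | X (t + 1) ω = a}|MeasurableSpace.comap (tup X 0 t) inferInstance]

def TransitionConsistent (μ : Measure Ω) (X : ℕ → Ω → 𝒳) (h : ℕ → Ω → H) (t : ℕ) : Prop :=
  ∀ B : Set H, MeasurableSet B →
    μ[ind {ω | h (t + 1) ω ∈ B}|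
        MeasurableSpace.comap (fun ω => (h t ω, X (t + 1) ω)) inferInstance]
      =ᵐ[μ] μ[ind {ω | h (t + 1) ω ∈ B}|MeasurableSpace.comap (tup X 0 (t + 1)) inferInstance]

variable {μ : Measure Ω} [IsFiniteMeasure μ] {X : ℕ → Ω → 𝒳} {h : ℕ → Ω → H}

local notation "𝓟" t:max => MeasurableSpace.comap (tup X 0 t) inferInstance
local notation "𝓗" t:max => MeasurableSpace.comap (h t) inferInstance

lemma condExp_ind_inter_ae_eq_of_consistent [MeasurableSingletonClass 𝒳] [StandardBorelSpace H]
    [Nonempty H] (hX : ∀ t, Measurable (X t)) {s : ℕ} (hM : 𝓗 s ≤ 𝓟 s)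
    (hM' : 𝓗 (s + 1) ≤ 𝓟 (s + 1)) (hnext : NextTokenConsistent μ X h s)
    (htrans : TransitionConsistent μ X h s) (a : 𝒳) {A : Set Ω} (hA : MeasurableSet A)
    (hAM : μ[ind A|𝓟 (s + 1)] =ᵐ[μ] μ[ind A|𝓗 (s + 1)]) :
    μ[ind ({ω | X (s + 1) ω = a} ∩ A)|𝓟 s]
      =ᵐ[μ] μ[ind ({ω | X (s + 1) ω = a} ∩ A)|𝓗 s] := by
  set E := {ω | X (s + 1) ω = a}
  have hF : 𝓟 s ≤ ‹_› := (measurable_tup hX 0 s).comap_le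
  have hF' : 𝓟 (s + 1) ≤ ‹_› := (measurable_tup hX 0 (s + 1)).comap_le
  have hE : MeasurableSet[𝓟 (s + 1)] E := measurable_comap_tup_succ s (measurableSet_singleton a)
  have hh : Measurable (h s) := Measurable.of_comap_le (hM.trans hF)
  set Z := μ[ind A|𝓗 (s + 1)]
  have hZ : μ[Z|𝓟 (s + 1)]
      =ᵐ[μ] μ[Z|MeasurableSpace.comap (fun ω => (h s ω, X (s + 1) ω)) inferInstance] :=
    condExp_ae_eq_of_forall_condExp_ind_preimage_ae_eq (Measurable.of_comap_le (hM'.trans hF'))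
      (measurable_tup hX 0 (s + 1)) (hh.prodMk (hX (s + 1))) htrans stronglyMeasurable_condExp
      integrable_condExp
  obtain ⟨φ, hφ, hEφ⟩ := exists_ind_mul_eq_ind_mul_comp (Y := h s) (X := X (s + 1))
    (stronglyMeasurable_condExp (f := Z) (μ := μ)) a
  have hφM : StronglyMeasurable[𝓗 s] (φ ∘ h s) := hφ.comp_measurable (comap_measurable _)
  have key : μ[ind E * ind A|𝓟 s] =ᵐ[μ] (φ ∘ h s) * μ[ind E|𝓗 s] :=
    calc μ[ind E * ind A|𝓟 s]
        =ᵐ[μ] μ[ind E * μ[ind A|𝓟 (s + 1)]|𝓟 s] :=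
          condExp_ind_mul_ae_eq_condExp_ind_mul_condExp (comap_tup_le_comap_tup_succ s) hF' hE
            (integrable_ind hA)
      _ =ᵐ[μ] μ[ind E * Z|𝓟 s] := condExp_congr_ae (Filter.EventuallyEq.rfl.mul hAM)
      _ =ᵐ[μ] μ[ind E * μ[Z|𝓟 (s + 1)]|𝓟 s] :=
          condExp_ind_mul_ae_eq_condExp_ind_mul_condExp (comap_tup_le_comap_tup_succ s) hF' hE
            integrable_condExp
      _ =ᵐ[μ] μ[(φ ∘ h s) * ind E|𝓟 s] := condExp_congr_ae <| by
          rw [mul_comm _ (ind E), ← hEφ]; exact Filter.EventuallyEq.rfl.mul hZ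
      _ =ᵐ[μ] (φ ∘ h s) * μ[ind E|𝓟 s] := condExp_mul_of_stronglyMeasurable_left (hφM.mono hM)
          (by rw [mul_comm, ← hEφ, ind_mul]; exact integrable_condExp.indicator (hF' _ hE))
          (integrable_ind (hF' _ hE))
      _ =ᵐ[μ] (φ ∘ h s) * μ[ind E|𝓗 s] := Filter.EventuallyEq.rfl.mul (hnext a).symm
  rw [ind_inter]
  exact key.trans
    (condExp_ae_eq_of_condExp_ae_eq_of_le hM hF (hφM.mul stronglyMeasurable_condExp) key).symm

lemma condExp_ind_preimage_tup_ae_eq [MeasurableSingletonClass 𝒳] [StandardBorelSpace H]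
    [Nonempty H] (hX : ∀ t, Measurable (X t)) {n : ℕ} (hn : 1 ≤ n) (s : ℕ)
    (hM : ∀ t, s ≤ t → t < s + n → 𝓗 t ≤ 𝓟 t)
    (hnext : ∀ t, s ≤ t → t < s + n → NextTokenConsistent μ X h t)
    (htrans : ∀ t, s ≤ t → t + 1 < s + n → TransitionConsistent μ X h t) (v : Fin n → 𝒳) :
    μ[ind (tup X s n ⁻¹' {v})|𝓟 s] =ᵐ[μ] μ[ind (tup X s n ⁻¹' {v})|𝓗 s] := by
  induction n, hn using Nat.le_induction generalizing s with
  | base =>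
    have hv : tup X s 1 ⁻¹' {v} = {ω | X (s + 1) ω = v 0} := by
      rw [preimage_tup_succ_singleton, Set.inter_eq_left]
      exact fun ω _ => Subsingleton.elim _ _
    rw [hv]
    exact (hnext s le_rfl (by omega) (v 0)).symm
  | succ n hn ih =>
    rw [preimage_tup_succ_singleton]
    exact condExp_ind_inter_ae_eq_of_consistent hX (hM s le_rfl (by omega))
      (hM (s + 1) (by omega) (by omega)) (hnext s le_rfl (by omega)) (htrans s le_rfl (by omega))
      (v 0) (measurable_tup hX _ _ (measurableSet_singleton _))
      (ih (s + 1) (fun t h1 h2 => hM t (by omega) (by omega))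
        (fun t h1 h2 => hnext t (by omega) (by omega))
        (fun t h1 h2 => htrans t (by omega) (by omega)) _)

end Consistency

theorem nextlat_yields_condIndep_general
    {Ω 𝒳 H : Type*}
    [MeasurableSpace Ω]
    [MeasurableSpace 𝒳] [DiscreteMeasurableSpace 𝒳]
    [Fintype 𝒳]
    [MeasurableSpace H] [StandardBorelSpace H]
    (μ : Measure Ω) [IsProbabilityMeasure μ]
    (T : ℕ)
    (X : ℕ → Ω → 𝒳) (hX : ∀ t, Measurable (X t))
    (h : ℕ → Ω → H) (g : (t : ℕ) → (Fin t → 𝒳) → H)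
    (hg : ∀ t, 1 ≤ t → t ≤ T → Measurable (g t))
    (hgh : ∀ t, 1 ≤ t → t ≤ T → ∀ ω, h t ω = g t (tup X 0 t ω))
    -- next-token consistency at every time `1 ≤ t ≤ T-1`
    (hnext : ∀ t, 1 ≤ t → t ≤ T - 1 → ∀ a : 𝒳,
      (μ[ind {ω | X (t + 1) ω = a} | MeasurableSpace.comap (h t) inferInstance])
        =ᵐ[μ]
      (μ[ind {ω | X (t + 1) ω = a} | MeasurableSpace.comap (tup X 0 t) inferInstance]))
    -- transition consistency at every time `1 ≤ t ≤ T-2`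
    (htrans : ∀ t, 1 ≤ t → t ≤ T - 2 → ∀ B : Set H, MeasurableSet B →
      (μ[ind {ω | h (t + 1) ω ∈ B} |
          MeasurableSpace.comap (fun ω => (h t ω, X (t + 1) ω)) inferInstance])
        =ᵐ[μ]
      (μ[ind {ω | h (t + 1) ω ∈ B} |
          MeasurableSpace.comap (tup X 0 (t + 1)) inferInstance])) :
    -- conclusion: conditional independence of future and past given `σ(h t)`
    ∀ t, 1 ≤ t → t ≤ T - 1 →
      ∀ A B : Set Ω,
        MeasurableSet[MeasurableSpace.comap (tup X t (T - t)) inferInstance] A →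
        MeasurableSet[MeasurableSpace.comap (tup X 0 t) inferInstance] B →
        (μ[ind (A ∩ B) | MeasurableSpace.comap (h t) inferInstance])
          =ᵐ[μ]
        (μ[ind A | MeasurableSpace.comap (h t) inferInstance]) *
          (μ[ind B | MeasurableSpace.comap (h t) inferInstance]) := by
  intro t ht1 htT A B hA hB
  have : Nonempty H := (nonempty_of_isProbabilityMeasure μ).map (h t)
  have hM (s : ℕ) (hs₁ : 1 ≤ s) (hs₂ : s ≤ T) : MeasurableSpace.comap (h s) inferInstance
      ≤ MeasurableSpace.comap (tup X 0 s) inferInstance := by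
    rw [show h s = g s ∘ tup X 0 s from funext (hgh s hs₁ hs₂), ← MeasurableSpace.comap_comp]
    exact MeasurableSpace.comap_mono (hg s hs₁ hs₂).comap_le
  have hfuture := condExp_ind_preimage_tup_ae_eq (μ := μ) hX (n := T - t) (by omega) t
    (fun s _ _ => hM s (by omega) (by omega)) (fun s _ _ => hnext s (by omega) (by omega))
    (fun s _ _ => htrans s (by omega) (by omega))
  exact condExp_ind_inter_ae_eq_mul (hM t ht1 (by omega)) (measurable_tup hX 0 t).comap_le
    ((measurable_tup hX t (T - t)).comap_le A hA) hB
    (condExp_ind_ae_eq_of_forall_preimage_singleton (measurable_tup hX t (T - t)) hfuture hA)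

/-- If next-token consistency holds for all `1 ≤ t ≤ T-1` and transition
consistency holds for all `1 ≤ t ≤ T-2`, then for every `1 ≤ t ≤ T-1` the σ-algebras
`σ(X_{t+1:T})` and `σ(X_{1:t})` are conditionally independent given `σ(h t)`. -/
theorem nextlat_yields_condIndep
    {Ω 𝒳 H : Type*}
    [MeasurableSpace Ω] [StandardBorelSpace Ω] [Nonempty Ω]
    [MeasurableSpace 𝒳] [DiscreteMeasurableSpace 𝒳]
    [Fintype 𝒳] [Nonempty 𝒳]
    [MeasurableSpace H] [StandardBorelSpace H]
    (μ : Measure Ω) [IsProbabilityMeasure μ]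
    (T : ℕ) (hT : 2 ≤ T)
    (X : ℕ → Ω → 𝒳) (hX : ∀ t, Measurable (X t))
    (h : ℕ → Ω → H) (g : (t : ℕ) → (Fin t → 𝒳) → H)
    (hg : ∀ t, 1 ≤ t → t ≤ T → Measurable (g t))
    (hgh : ∀ t, 1 ≤ t → t ≤ T → ∀ ω, h t ω = g t (tup X 0 t ω))
    -- next-token consistency at every time `1 ≤ t ≤ T-1`
    (hnext : ∀ t, 1 ≤ t → t ≤ T - 1 → ∀ a : 𝒳,
      (μ[ind {ω | X (t + 1) ω = a} | MeasurableSpace.comap (h t) inferInstance])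
        =ᵐ[μ]
      (μ[ind {ω | X (t + 1) ω = a} | MeasurableSpace.comap (tup X 0 t) inferInstance]))
    -- transition consistency at every time `1 ≤ t ≤ T-2`
    (htrans : ∀ t, 1 ≤ t → t ≤ T - 2 → ∀ B : Set H, MeasurableSet B →
      (μ[ind {ω | h (t + 1) ω ∈ B} |
          MeasurableSpace.comap (fun ω => (h t ω, X (t + 1) ω)) inferInstance])
        =ᵐ[μ]
      (μ[ind {ω | h (t + 1) ω ∈ B} |
          MeasurableSpace.comap (tup X 0 (t + 1)) inferInstance])) :
    -- conclusion: conditional independence of future and past given `σ(h t)`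
    ∀ t, 1 ≤ t → t ≤ T - 1 →
      ∀ A B : Set Ω,
        MeasurableSet[MeasurableSpace.comap (tup X t (T - t)) inferInstance] A →
        MeasurableSet[MeasurableSpace.comap (tup X 0 t) inferInstance] B →
        (μ[ind (A ∩ B) | MeasurableSpace.comap (h t) inferInstance])
          =ᵐ[μ]
        (μ[ind A | MeasurableSpace.comap (h t) inferInstance]) *
          (μ[ind B | MeasurableSpace.comap (h t) inferInstance]) :=
  nextlat_yields_condIndep_general μ T X hX h g hg hgh hnext htrans
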